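/- Let μ ⊆ λ be partitions, ν ⊢ |λ/μ|, and A ∈ YT(λ/μ, ν). Then A is a Littlewood–Richardson tableau if and only if its jeu de taquin rectification ψ(A) is the canonical tableau Can(ν). -/
import Mathlib


/-!
Common setup: a (skew) semistandard Young tableau with entries `≤ m` is encoded by
its Gelfand–Tsetlin pattern `g : ℕ → ℕ → ℕ`, where `g i j = μ_i +` (number of entries
`≤ j` in row `i`); rows `i = 0, 1, 2, …` are counted from the top, entry values are
`1, …, m`, and columns are `j = 0, …, m` (column `0` is the inner shape `μ`,
column `m` is the outer shape `λ`).  All maps in the paper are realized concretely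
via Bender–Knuth transformations, following Propositions 1–3 of the paper.
-/

namespace YoungTableauBijections

/-- Gelfand–Tsetlin-type encoding of a skew semistandard Young tableau. -/
abbrev GT : Type := ℕ → ℕ → ℕ

/-- `p` is a partition: weakly decreasing, finitely many nonzero parts (0-indexed). -/
def IsPartition (p : ℕ → ℕ) : Prop :=
  (∀ i, p (i + 1) ≤ p i) ∧ ∃ N, ∀ i, N ≤ i → p i = 0

/-- The number of (nonzero) rows `ℓ(p)` of a partition. -/
noncomputable def numRows (p : ℕ → ℕ) : ℕ := sInf {N | ∀ i, N ≤ i → p i = 0}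

/-- The size `|p|` of a partition (or of a weight). -/
noncomputable def psize (p : ℕ → ℕ) : ℕ := ∑' i, p i

/-- `mu ⊆ lam` componentwise. -/
def subShape (mu lam : ℕ → ℕ) : Prop := ∀ i, mu i ≤ lam i

/-- `g` encodes a semistandard skew tableau with entries `≤ m` (weakly increasing
rows, strictly increasing columns, finitely many cells); columns beyond `m` are
required to be constant (no junk). -/
def IsSSYT (m : ℕ) (g : GT) : Prop :=
  (∀ i j, j < m → g i j ≤ g i (j + 1)) ∧
  (∀ i j, j < m → g (i + 1) (j + 1) ≤ g i j) ∧
  (∀ i, g (i + 1) 0 ≤ g i 0) ∧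
  (∃ N, ∀ i, N ≤ i → g i m = 0) ∧
  (∀ i j, m ≤ j → g i j = g i m)

/-- The number of entries equal to `j + 1` in row `i`
(the recording matrix, 0-indexed). -/
def rowCount (g : GT) (i j : ℕ) : ℕ := g i (j + 1) - g i j

/-- The weight: `wt g j` is the total number of entries equal to `j + 1`. -/
noncomputable def wt (g : GT) (j : ℕ) : ℕ := ∑' i, rowCount g i j

/-- `g ∈ YT(λ/μ, a)`: semistandard, of shape `λ/μ`, entries `≤ m`, and weight `a`
(where `a j` is the required number of entries equal to `j + 1`). -/
def MemYT (m : ℕ) (lam mu a : ℕ → ℕ) (g : GT) : Prop :=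
  IsSSYT m g ∧ (∀ i, g i 0 = mu i) ∧ (∀ i, g i m = lam i) ∧
  ∀ j, j < m → wt g j = a j

/-- The reversed weight `a* = (a_m, …, a_1)` (0-indexed). -/
def wrev (m : ℕ) (a : ℕ → ℕ) : ℕ → ℕ := fun j => a (m - 1 - j)

/-- The lattice-word (Littlewood–Richardson) condition: every initial segment of the
right-to-left, top-to-bottom reading word has at least as many entries `r` as
entries `r + 1`. -/
def IsLattice (m : ℕ) (g : GT) : Prop :=
  ∀ j i : ℕ, j + 1 < m →
    (∑ q ∈ Finset.range (i + 1), rowCount g q (j + 1)) ≤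
      ∑ q ∈ Finset.range i, rowCount g q j

/-- `g ∈ LR(λ/μ, ν)`. -/
def MemLR (m : ℕ) (lam mu nu : ℕ → ℕ) (g : GT) : Prop :=
  MemYT m lam mu nu g ∧ IsLattice m g

/-- The canonical tableau `Can(λ)`: row `i` is filled with entries `i + 1`. -/
def canGT (lam : ℕ → ℕ) : GT := fun i j => if i < j then lam i else 0

/-- The Bender–Knuth transformation `s_r` (`1 ≤ r ≤ m - 1`), acting on GT patterns:
it replaces `a_{i,r}` by
`min (a_{i,r+1}) (a_{i-1,r-1}) + max (a_{i,r-1}) (a_{i+1,r+1}) - a_{i,r}`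
(with the top-row convention that the `min` term is `a_{i,r+1}` for the first row). -/
def bk (r : ℕ) (g : GT) : GT := fun i j =>
  if j = r then
    (if i = 0 then g i (r + 1) else min (g i (r + 1)) (g (i - 1) (r - 1))) +
      max (g i (r - 1)) (g (i + 1) (r + 1)) - g i r
  else g i j

/-- Apply a word in the Bender–Knuth generators; the rightmost letter acts first. -/
def applyWord : List ℕ → GT → GT
  | [], g => g
  | r :: w, g => bk r (applyWord w g)

/-- The block `(s_b s_{b-1} ⋯ s_1)`. -/
def descBlock (b : ℕ) : List ℕ := (List.range b).map fun i => b - i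

/-- `z_m = (s_1)(s_2 s_1)(s_3 s_2 s_1) ⋯ (s_{m-1} ⋯ s_2 s_1)` as a word. -/
def zWord (m : ℕ) : List ℕ := ((List.range (m - 1)).map fun q => descBlock (q + 1)).flatten

/-- The block `(s_j s_{j+1} ⋯ s_{j+r-1})`. -/
def ascBlock (j r : ℕ) : List ℕ := (List.range r).map fun i => j + i

/-- `t_{r,l} = (s_l s_{l+1} ⋯ s_{l+r-1}) ⋯ (s_2 s_3 ⋯ s_{r+1})(s_1 s_2 ⋯ s_r)`
as a word (here `m = r + l`). -/
def tWord (r l : ℕ) : List ℕ := ((List.range l).map fun q => ascBlock (l - q) r).flatten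

/-- The map `z_m`. -/
def zmapGT (m : ℕ) : GT → GT := applyWord (zWord m)

/-- The map `t_{r,l}`. -/
def tmapGT (r l : ℕ) : GT → GT := applyWord (tWord r l)

/-- Cut all columns beyond column `m` (normalize to entries `≤ m`). -/
def restrictGT (m : ℕ) (g : GT) : GT := fun i j => g i (min j m)

/-- The Schützenberger involution `ξ` on (skew) tableaux with entries `≤ m`,
computed by the Bender–Knuth word `z_m` (Proposition 1 of the paper). -/
def schutz (m : ℕ) (g : GT) : GT := restrictGT m (zmapGT m g)

/-- `glue r B A` encodes `B ⋆ Ã`: the union of `B` (entries `≤ r`) with `A`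
relabelled to have entries `r + 1, r + 2, …`. -/
def glue (r : ℕ) (B A : GT) : GT := fun i j => if j ≤ r then B i j else A i (j - r)

/-- Shift columns left by `s` (relabel entries by subtracting `s`). -/
def shiftCols (s : ℕ) (g : GT) : GT := fun i j => g i (j + s)

/-- Tableau switching `ζ(B, A) = (A′, B′)`, where `B` has entries `≤ r` and `A` has
entries `≤ l`: glue, apply `t_{r,l}`, and split again (Proposition 2 of the paper). -/
def switch (r l : ℕ) (B A : GT) : GT × GT :=
  (restrictGT l (tmapGT r l (glue r B A)),
    restrictGT r (shiftCols l (tmapGT r l (glue r B A))))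

/-- Jeu de taquin rectification `ψ` of a skew tableau with entries `≤ l`:
switch it past the canonical tableau of its inner shape. -/
noncomputable def rect (l : ℕ) (A : GT) : GT :=
  (switch (numRows fun i => A i 0) l (canGT fun i => A i 0) A).1

/-- `V ∈ Mat(a, b)`: a `k × k` nonnegative integer matrix (0-indexed) with row
sums `a` and column sums `b`. -/
def MemMat (k : ℕ) (a b : ℕ → ℕ) (V : ℕ → ℕ → ℕ) : Prop :=
  (∀ i, i < k → ∑ j ∈ Finset.range k, V i j = a i) ∧
  (∀ j, j < k → ∑ i ∈ Finset.range k, V i j = b j)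

/-- The skew tableau `Y ∈ YT(π/σ, b)` of Proposition 3: row `(k+1) - i` (1-indexed)
contains exactly `v_{i,j}` entries equal to `j`. -/
def rskY (k : ℕ) (V : ℕ → ℕ → ℕ) : GT := fun p j =>
  if p < k then
    (∑ q ∈ Finset.range (k - p - 1), ∑ s ∈ Finset.range k, V q s) +
      ∑ q ∈ Finset.range (min j k), V (k - p - 1) q
  else 0

/-- The companion skew tableau `X` of Proposition 3 (built from the transpose). -/
def rskX (k : ℕ) (V : ℕ → ℕ → ℕ) : GT := rskY k fun i j => V j i

/-- The RSK correspondence `φ(V) = (B, A)` (insertion tableau, recording tableau),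
realized via jeu de taquin as in Proposition 3 of the paper. -/
noncomputable def rsk (k : ℕ) (V : ℕ → ℕ → ℕ) : GT × GT :=
  (rect k (rskY k V), rect k (rskX k V))

/-- The rotated complemented tableau `A^•` of a straight-shape tableau `A` with
entries `≤ k` and at most `l` rows: `A^• i j = λ_1 - A (l-1-i) (k-j)`. -/
def rotGT (k l : ℕ) (A : GT) : GT := fun i j =>
  if i < l then A 0 k - A (l - 1 - i) (k - min j k) else 0

/-- `composeGT q s Ytop Xbot` encodes the composition: `Ytop` occupies the top `q`
rows, shifted `s` columns to the right, sitting above and to the right of `Xbot`. -/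
def composeGT (q s : ℕ) (Ytop Xbot : GT) : GT := fun i j =>
  if i < q then s + Ytop i j else Xbot (i - q) j

/-- `B ∈ CF(μ, ν, λ)`: `B ∈ YT(μ, λ - ν)` and `B ∘ Can(ν) ∈ LR(μ ∘ ν, λ)`
(all entries `≤ l`, where `l = ℓ(λ)`). -/
def MemCF (l : ℕ) (mu nu lam : ℕ → ℕ) (B : GT) : Prop :=
  MemYT l mu (fun _ => 0) (fun j => lam j - nu j) B ∧
  MemLR l (fun i => if i < l then mu 0 + nu i else mu (i - l))
    (fun i => if i < l then mu 0 else 0) lam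
    (composeGT l (mu 0) (canGT nu) B)

/-- `B ∈ CF*(μ, ν, λ)`: `B ∈ YT(μ, (λ - ν)*)` and `B^• ∘ Can(ν) ∈ LR(μ^• ∘ ν, λ)`. -/
def MemCFstar (l : ℕ) (mu nu lam : ℕ → ℕ) (B : GT) : Prop :=
  MemYT l mu (fun _ => 0) (wrev l fun j => lam j - nu j) B ∧
  MemLR l
    (fun i => if i < l then mu 0 + nu i
      else if i - l < numRows mu then mu 0 else 0)
    (fun i => if i < l then mu 0
      else if i - l < numRows mu then mu 0 - mu (numRows mu - 1 - (i - l)) else 0)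
    lam
    (composeGT l (mu 0) (canGT nu) (rotGT l (numRows mu) B))

/-- The extended recording matrix of `A` (1-indexed), with the conventions
`c_{0,q} = 0`, `c_{i,0} = μ_i`. -/
def cext (A : GT) (i q : ℕ) : ℕ :=
  if i = 0 then 0 else if q = 0 then A (i - 1) 0 else rowCount A (i - 1) (q - 1)

/-- The recording matrix `D = (d_{i,j})` of `γ(A)` (1-indexed):
`d_{i,j} = Σ_{q=0}^{l-j} c_{l-j+i,q} - Σ_{q=0}^{l-j+1} c_{l-j+1+i,q}`. -/
def dmat (l : ℕ) (A : GT) (i j : ℕ) : ℕ :=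
  (∑ q ∈ Finset.range (l - j + 1), cext A (l - j + i) q) -
    ∑ q ∈ Finset.range (l - j + 2), cext A (l - j + 1 + i) q

/-- The map `γ`, on GT patterns (its output is the straight-shape tableau of shape
`μ` whose recording matrix is `D`). -/
def gammaMap (l : ℕ) (A : GT) : GT := fun i j =>
  ∑ q ∈ Finset.Icc 1 (min j l), dmat l A (i + 1) q

/-- The companion map `τ`: `τ(A)` is the straight-shape tableau whose recording
matrix is `e_{i,j} = c_{j,i}`. -/
def tauMap (l : ℕ) (A : GT) : GT := fun i j =>
  ∑ q ∈ Finset.range (min j l), rowCount A q i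

/-- The reversal map `χ = ζ ∘ ξ ∘ ζ`:
`χ(A) = A″` where `(A′, C′) = ζ(Can(μ), A)` and `(C″, A″) = ζ(ξ^N(A′), C′)`. -/
def chiMap (r l : ℕ) (mu : ℕ → ℕ) (A : GT) : GT :=
  (switch l r (schutz l (switch r l (canGT mu) A).1) ((switch r l (canGT mu) A).2)).2

/-- The octahedral map `ς(A, B) = (B′, D)` defined by three tableau switchings. -/
noncomputable def octa (k1 k2 k3 : ℕ) (lam : ℕ → ℕ) (A B : GT) : GT × GT :=
  let C1 := (switch k1 k2 (canGT lam) A).2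
  let P := switch k1 k3 C1 B
  let pi := fun i => P.1 i k3
  (P.1, (switch (numRows pi) k1 (canGT pi) P.2).2)

-- ====================  auxiliary development  ====================

section Aux

/-- Value-pair lattice condition between values `v+1` and `v`. -/
def Cv (g : GT) (v : ℕ) : Prop :=
  ∀ i : ℕ, (∑ q ∈ Finset.range (i + 1), rowCount g q v) ≤
    ∑ q ∈ Finset.range i, rowCount g q (v - 1)

/-- Lattice conditions between consecutive values in `[a, b]`. -/
def LatB (g : GT) (a b : ℕ) : Prop := ∀ v, a ≤ v → v < b → Cv g v

lemma isLattice_iff_latB (m : ℕ) (g : GT) : IsLattice m g ↔ LatB g 1 m := by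
  constructor
  · intro h v hv1 hvm i
    have := h (v - 1) i (by omega)
    simpa [Nat.sub_add_cancel hv1] using this
  · intro h j i hj
    have := h (j + 1) (by omega) (by omega) i
    simpa using this

lemma bk_apply_ne (r : ℕ) (g : GT) (i j : ℕ) (h : j ≠ r) : bk r g i j = g i j := by
  unfold bk; rw [if_neg h]

lemma bk_self (r : ℕ) (g : GT) (i : ℕ) :
    bk r g i r = (if i = 0 then g i (r + 1) else min (g i (r + 1)) (g (i - 1) (r - 1))) +
      max (g i (r - 1)) (g (i + 1) (r + 1)) - g i r := by
  unfold bk; rw [if_pos rfl]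

lemma applyWord_append (u v : List ℕ) (g : GT) :
    applyWord (u ++ v) g = applyWord u (applyWord v g) := by
  induction u with
  | nil => simp [applyWord]
  | cons x u ih => simp [applyWord, ih]

/-- columns other than the letters of the word are untouched -/
lemma applyWord_col_ne (w : List ℕ) (g : GT) (i j : ℕ) (h : ∀ x ∈ w, x ≠ j) :
    applyWord w g i j = g i j := by
  induction w with
  | nil => simp [applyWord]
  | cons x u ih =>
    show bk x (applyWord u g) i j = g i j
    rw [bk_apply_ne _ _ _ _ (fun hh => h x (by simp) hh.symm), ih]
    intro y hy; exact h y (List.mem_cons_of_mem _ hy)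

lemma bk_comm (x y : ℕ) (g : GT) (h : y + 2 ≤ x) :
    bk x (bk y g) = bk y (bk x g) := by
  funext i j
  rcases eq_or_ne j x with rfl | hx
  · have hyx : j ≠ y := by omega
    rw [bk_apply_ne y _ _ _ hyx, bk_self, bk_self,
      bk_apply_ne y _ _ _ (by omega), bk_apply_ne y _ _ _ (by omega),
      bk_apply_ne y _ _ _ (by omega), bk_apply_ne y _ _ _ (by omega),
      bk_apply_ne y _ _ _ hyx]
  · rcases eq_or_ne j y with rfl | hy
    · rw [bk_apply_ne x _ _ _ hx, bk_self, bk_self,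
        bk_apply_ne x _ _ _ (by omega), bk_apply_ne x _ _ _ (by omega),
        bk_apply_ne x _ _ _ (by omega), bk_apply_ne x _ _ _ (by omega),
        bk_apply_ne x _ _ _ hx]
    · rw [bk_apply_ne x _ _ _ hx, bk_apply_ne y _ _ _ hy,
        bk_apply_ne y _ _ _ hy, bk_apply_ne x _ _ _ hx]

/-- move a big letter to the right across a word of small letters -/
lemma applyWord_move (x : ℕ) (v : List ℕ) (g : GT) (h : ∀ y ∈ v, y + 2 ≤ x) :
    applyWord (x :: v) g = applyWord (v ++ [x]) g := by
  induction v generalizing g with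
  | nil => simp
  | cons y u ih =>
    have h1 : applyWord (x :: y :: u) g = bk x (bk y (applyWord u g)) := rfl
    rw [h1, bk_comm x y _ (h y (by simp))]
    have h2 : applyWord ((y :: u) ++ [x]) g = bk y (applyWord (u ++ [x]) g) := rfl
    rw [h2, ← ih g (fun z hz => h z (List.mem_cons_of_mem _ hz))]
    rfl

end Aux
section SSYT

variable {M : ℕ} {g : GT}

lemma IsSSYT.row (hg : IsSSYT M g) : ∀ i j, j < M → g i j ≤ g i (j + 1) := hg.1
lemma IsSSYT.colc (hg : IsSSYT M g) : ∀ i j, j < M → g (i + 1) (j + 1) ≤ g i j := hg.2.1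

/-- the two key bounds for the Bender–Knuth formula -/
lemma bk_bounds (hg : IsSSYT M g) {t : ℕ} (ht1 : 1 ≤ t) (ht : t < M) (i : ℕ) :
    max (g i (t - 1)) (g (i + 1) (t + 1)) ≤ g i t ∧
      g i t ≤ (if i = 0 then g i (t + 1) else min (g i (t + 1)) (g (i - 1) (t - 1))) := by
  constructor
  · have h1 : g i (t - 1) ≤ g i t := by
      have := hg.row i (t - 1) (by omega); rwa [Nat.sub_add_cancel ht1] at this
    have h2 : g (i + 1) (t + 1) ≤ g i t := hg.colc i t ht
    omega
  · have h1 : g i t ≤ g i (t + 1) := hg.row i t ht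
    rcases Nat.eq_zero_or_pos i with rfl | hi
    · simpa using h1
    · have h2 : g i t ≤ g (i - 1) (t - 1) := by
        have := hg.colc (i - 1) (t - 1) (by omega)
        rw [Nat.sub_add_cancel ht1, Nat.sub_add_cancel hi] at this
        exact this
      simp only [if_neg (by omega : ¬ i = 0)]
      omega

lemma bk_self_eval (hg : IsSSYT M g) {t : ℕ} (ht1 : 1 ≤ t) (ht : t < M) (i : ℕ) :
    bk t g i t + g i t =
      (if i = 0 then g i (t + 1) else min (g i (t + 1)) (g (i - 1) (t - 1))) +
        max (g i (t - 1)) (g (i + 1) (t + 1)) := by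
  have h := bk_bounds hg ht1 ht i
  rw [bk_self]
  omega

lemma bk_le_upper (hg : IsSSYT M g) {t : ℕ} (ht1 : 1 ≤ t) (ht : t < M) (i : ℕ) :
    bk t g i t ≤ (if i = 0 then g i (t + 1) else min (g i (t + 1)) (g (i - 1) (t - 1))) := by
  have h := bk_bounds hg ht1 ht i
  have h2 := bk_self_eval hg ht1 ht i
  omega

lemma bk_ge_lower (hg : IsSSYT M g) {t : ℕ} (ht1 : 1 ≤ t) (ht : t < M) (i : ℕ) :
    max (g i (t - 1)) (g (i + 1) (t + 1)) ≤ bk t g i t := by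
  have h := bk_bounds hg ht1 ht i
  have h2 := bk_self_eval hg ht1 ht i
  omega

lemma bk_isSSYT (hg : IsSSYT M g) {t : ℕ} (ht1 : 1 ≤ t) (ht : t < M) :
    IsSSYT M (bk t g) := by
  obtain ⟨hrow, hcol, h0, ⟨N, hN⟩, hstab⟩ := hg
  have hg' : IsSSYT M g := ⟨hrow, hcol, h0, ⟨N, hN⟩, hstab⟩
  refine ⟨?_, ?_, ?_, ⟨N, ?_⟩, ?_⟩
  · intro i j hj
    rcases eq_or_ne j t with rfl | hjt
    · rw [bk_apply_ne j g i (j + 1) (by omega)]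
      have h2 := bk_le_upper hg' ht1 ht i
      have h1 : g i j ≤ g i (j + 1) := hrow i j hj
      rcases eq_or_ne i 0 with rfl | hi
      · rw [if_pos rfl] at h2; exact h2
      · rw [if_neg hi] at h2; exact le_trans h2 (min_le_left _ _)
    · rw [bk_apply_ne t g i j hjt]
      rcases eq_or_ne (j + 1) t with hj1 | hj1
      · have h2 := bk_ge_lower hg' ht1 ht i
        have h3 : g i (t - 1) ≤ bk t g i t := le_trans (le_max_left _ _) h2
        rw [hj1]
        have : t - 1 = j := by omega
        rwa [this] at h3
      · rw [bk_apply_ne t g i (j + 1) hj1]; exact hrow i j hj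
  · intro i j hj
    rcases eq_or_ne j t with rfl | hjt
    · rw [bk_apply_ne j g (i + 1) (j + 1) (by omega)]
      have h2 := bk_ge_lower hg' ht1 ht i
      exact le_trans (le_max_right _ _) h2
    · rcases eq_or_ne (j + 1) t with hj1 | hj1
      · rw [bk_apply_ne t g i j hjt]
        have h2 := bk_le_upper hg' ht1 ht (i + 1)
        rw [if_neg (by omega : ¬ i + 1 = 0)] at h2
        have h3 : bk t g (i + 1) t ≤ g (i + 1 - 1) (t - 1) :=
          le_trans h2 (min_le_right _ _)
        rw [hj1]
        have e1 : i + 1 - 1 = i := by omega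
        have e2 : t - 1 = j := by omega
        rwa [e1, e2] at h3
      · rw [bk_apply_ne t g (i + 1) (j + 1) hj1, bk_apply_ne t g i j hjt]
        exact hcol i j hj
  · intro i
    rw [bk_apply_ne _ _ _ _ (by omega), bk_apply_ne _ _ _ _ (by omega)]
    exact h0 i
  · intro i hi
    rw [bk_apply_ne _ _ _ _ (by omega)]
    exact hN i hi
  · intro i j hj
    rw [bk_apply_ne _ _ _ _ (by omega), bk_apply_ne _ _ _ _ (by omega)]
    exact hstab i j hj

lemma applyWord_isSSYT {w : List ℕ} (hw : ∀ x ∈ w, 1 ≤ x ∧ x < M) (hg : IsSSYT M g) :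
    IsSSYT M (applyWord w g) := by
  induction w with
  | nil => exact hg
  | cons x u ih =>
    exact bk_isSSYT (ih (fun y hy => hw y (List.mem_cons_of_mem _ hy)))
      (hw x (by simp)).1 (hw x (by simp)).2

end SSYT
section BOT

/-- `ℤ`-valued prefix-sum lattice defect between values `v+2` and `v+1`. -/
def Xq (g : GT) (v : ℕ) (i : ℕ) : ℤ :=
  (∑ s ∈ Finset.range (i + 1), ((g s (v + 2) : ℤ) - g s (v + 1))) -
    ∑ s ∈ Finset.range i, ((g s (v + 1) : ℤ) - g s v)

variable {M : ℕ} {g : GT}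

lemma cv_iff_Xq (hg : IsSSYT M g) {v : ℕ} (hv : v + 1 < M) :
    Cv g (v + 1) ↔ ∀ i, Xq g v i ≤ 0 := by
  have hc1 : ∀ q, (rowCount g q (v + 1) : ℤ) = (g q (v + 2) : ℤ) - g q (v + 1) := by
    intro q
    have h := hg.row q (v + 1) hv
    unfold rowCount
    push_cast [Nat.cast_sub h]
    ring
  have hc2 : ∀ q, (rowCount g q v : ℤ) = (g q (v + 1) : ℤ) - g q v := by
    intro q
    have h := hg.row q v (by omega)
    unfold rowCount
    push_cast [Nat.cast_sub h]
    ring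
  have key : ∀ i, ((∑ q ∈ Finset.range (i + 1), rowCount g q (v + 1)) ≤
      ∑ q ∈ Finset.range i, rowCount g q v) ↔ Xq g v i ≤ 0 := by
    intro i
    rw [← Nat.cast_le (α := ℤ), Nat.cast_sum, Nat.cast_sum,
      Finset.sum_congr rfl (fun q _ => hc1 q), Finset.sum_congr rfl (fun q _ => hc2 q)]
    unfold Xq
    omega
  unfold Cv
  simp only [Nat.add_sub_cancel]
  exact forall_congr' key

/-- the `min` part of the Bender–Knuth formula, as an integer -/
def mbz (g : GT) (t i : ℕ) : ℤ :=
  if i = 0 then g 0 (t + 1) else min (g i (t + 1) : ℤ) (g (i - 1) (t - 1))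

lemma mbz_le (g : GT) (t i : ℕ) : mbz g t i ≤ (g i (t + 1) : ℤ) := by
  rcases eq_or_ne i 0 with rfl | hi
  · simp [mbz]
  · simp only [mbz, if_neg hi]
    exact min_le_left _ _

lemma bk_eval_z {M : ℕ} {g : GT} (hg : IsSSYT M g) {t : ℕ} (ht1 : 1 ≤ t) (ht : t < M) (s : ℕ) :
    (bk t g s t : ℤ) + g s t =
      mbz g t s + max (g s (t - 1) : ℤ) (g (s + 1) (t + 1)) := by
  have h := bk_self_eval hg ht1 ht s
  have h2 := congrArg (fun n : ℕ => (n : ℤ)) h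
  push_cast at h2
  rcases eq_or_ne s 0 with rfl | hs
  · simp only [if_pos rfl] at h2
    simp only [mbz, if_pos rfl]
    omega
  · simp only [if_neg hs] at h2
    simp only [mbz, if_neg hs]
    omega

lemma bot_ident (hg : IsSSYT M g) {t : ℕ} (ht1 : 1 ≤ t) (ht2 : t + 2 ≤ M) (i : ℕ) :
    Xq (bk (t + 1) (bk t g)) (t - 1) i =
      Xq g t i + max ((g (i + 1) (t + 2) : ℤ) - bk t g i t) 0 -
        ((g i (t + 1) : ℤ) - mbz g t i) := by
  have hk : IsSSYT M (bk t g) := bk_isSSYT hg ht1 (by omega)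
  have hEb : ∀ s, (bk t g s t : ℤ) + g s t =
      mbz g t s + max (g s (t - 1) : ℤ) (g (s + 1) (t + 1)) :=
    fun s => bk_eval_z hg ht1 (by omega) s
  have hEc : ∀ s, (bk (t + 1) (bk t g) s (t + 1) : ℤ) + g s (t + 1) =
      (if s = 0 then (g 0 (t + 2) : ℤ) else min (g s (t + 2) : ℤ) (bk t g (s - 1) t)) +
        max (bk t g s t : ℤ) (g (s + 1) (t + 2)) := by
    intro s
    have h := bk_self_eval hk (by omega : 1 ≤ t + 1) (by omega : t + 1 < M) s
    rw [Nat.add_sub_cancel] at h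
    rw [bk_apply_ne t g s (t + 1 + 1) (by omega), bk_apply_ne t g (s + 1) (t + 1 + 1) (by omega),
      bk_apply_ne t g s (t + 1) (by omega)] at h
    have h2 := congrArg (fun n : ℕ => (n : ℤ)) h
    push_cast at h2
    rw [show t + 1 + 1 = t + 2 from rfl] at h2
    rcases eq_or_ne s 0 with rfl | hs
    · simp only [if_pos rfl] at h2 ⊢
      omega
    · simp only [if_neg hs] at h2 ⊢
      omega
  have hct : ∀ s, bk (t + 1) (bk t g) s t = bk t g s t :=
    fun s => bk_apply_ne (t + 1) _ s t (by omega)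
  have hcm : ∀ s, bk (t + 1) (bk t g) s (t - 1) = g s (t - 1) := by
    intro s
    rw [bk_apply_ne (t + 1) _ s (t - 1) (by omega), bk_apply_ne t g s (t - 1) (by omega)]
  have e1 : t - 1 + 2 = t + 1 := by omega
  have e2 : t - 1 + 1 = t := by omega
  induction i with
  | zero =>
    unfold Xq
    simp only [e1, e2, Finset.sum_range_succ, Finset.range_zero, Finset.sum_empty]
    have h1 := hEc 0
    rw [if_pos rfl] at h1
    have h2 := hct 0
    have h3 : mbz g t 0 = (g 0 (t + 1) : ℤ) := by simp [mbz]
    rw [h2, h3]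
    omega
  | succ n ih =>
    unfold Xq at ih ⊢
    simp only [e1, e2, Finset.sum_range_succ] at ih ⊢
    have h1 := hEc (n + 1)
    rw [if_neg (by omega : ¬ n + 1 = 0), Nat.add_sub_cancel] at h1
    have h2 := hct (n + 1)
    have h3 := hct n
    have h4 := hcm n
    have h5 := hEb n
    have h6 : mbz g t (n + 1) = min (g (n + 1) (t + 1) : ℤ) (g n (t - 1)) := by
      simp only [mbz, if_neg (by omega : ¬ n + 1 = 0), Nat.add_sub_cancel]
    rw [h2, h3, h4]
    rw [h3] at ih
    omega

lemma bot_iff (hg : IsSSYT M g) {t : ℕ} (ht1 : 1 ≤ t) (ht2 : t + 2 ≤ M) :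
    Cv g (t + 1) ↔ Cv (bk (t + 1) (bk t g)) t := by
  have hk : IsSSYT M (bk t g) := bk_isSSYT hg ht1 (by omega)
  have hh : IsSSYT M (bk (t + 1) (bk t g)) := bk_isSSYT hk (by omega) (by omega)
  have e2 : t - 1 + 1 = t := by omega
  have hX := cv_iff_Xq hg (v := t) (by omega)
  have hY : Cv (bk (t + 1) (bk t g)) t ↔ ∀ i, Xq (bk (t + 1) (bk t g)) (t - 1) i ≤ 0 := by
    have h := cv_iff_Xq hh (v := t - 1) (by omega)
    rwa [e2] at h
  rw [hX, hY]
  constructor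
  · intro h i
    have hI := bot_ident hg ht1 ht2 i
    by_cases hc : (g (i + 1) (t + 2) : ℤ) ≤ bk t g i t
    · have hmb := mbz_le g t i
      have := h i
      omega
    · have hEb := bk_eval_z hg ht1 (by omega : t < M) i
      have h1 := h i
      have h2 := h (i + 1)
      have hstep : Xq g t (i + 1) = Xq g t i +
          ((g (i + 1) (t + 2) : ℤ) - g (i + 1) (t + 1)) - ((g i (t + 1) : ℤ) - g i t) := by
        unfold Xq
        simp only [Finset.sum_range_succ]
        ring
      omega
  · intro h i
    have hI := bot_ident hg ht1 ht2 i
    by_cases hc : (g i (t + 1) : ℤ) ≤ mbz g t i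
    · have := h i
      omega
    · have hi0 : i ≠ 0 := by
        intro h0; subst h0; simp [mbz] at hc
      obtain ⟨n, rfl⟩ : ∃ n, i = n + 1 := ⟨i - 1, by omega⟩
      have hYn := h n
      have hEc := bk_eval_z hk (by omega : 1 ≤ t + 1) (by omega : t + 1 < M) (n + 1)
      rw [Nat.add_sub_cancel] at hEc
      have hk1 : bk t g (n + 1) (t + 1) = g (n + 1) (t + 1) :=
        bk_apply_ne t g (n + 1) (t + 1) (by omega)
      have hmz : mbz (bk t g) (t + 1) (n + 1) =
          min ((g (n + 1) (t + 2)) : ℤ) (bk t g n t) := by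
        have e : bk t g (n + 1) (t + 1 + 1) = g (n + 1) (t + 2) :=
          bk_apply_ne t g (n + 1) (t + 1 + 1) (by omega)
        simp only [mbz, if_neg (by omega : ¬ n + 1 = 0), Nat.add_sub_cancel, e]
      have hk2 : bk t g (n + 1 + 1) (t + 1 + 1) = g (n + 1 + 1) (t + 2) :=
        bk_apply_ne t g (n + 1 + 1) (t + 1 + 1) (by omega)
      rw [hmz, hk1, hk2] at hEc
      have hmbn : mbz g t (n + 1) = min ((g (n + 1) (t + 1)) : ℤ) (g n (t - 1)) := by
        simp only [mbz, if_neg (by omega : ¬ n + 1 = 0), Nat.add_sub_cancel]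
      have hstepY : Xq (bk (t + 1) (bk t g)) (t - 1) (n + 1) =
          Xq (bk (t + 1) (bk t g)) (t - 1) n +
          ((bk (t + 1) (bk t g) (n + 1) (t + 1) : ℤ) - bk (t + 1) (bk t g) (n + 1) t) -
          ((bk (t + 1) (bk t g) n t : ℤ) - bk (t + 1) (bk t g) n (t - 1)) := by
        unfold Xq
        simp only [e2, show t - 1 + 2 = t + 1 from by omega, Finset.sum_range_succ]
        ring
      have hct1 : bk (t + 1) (bk t g) (n + 1) t = bk t g (n + 1) t :=
        bk_apply_ne (t + 1) _ (n + 1) t (by omega)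
      have hctn : bk (t + 1) (bk t g) n t = bk t g n t :=
        bk_apply_ne (t + 1) _ n t (by omega)
      have hcmn : bk (t + 1) (bk t g) n (t - 1) = g n (t - 1) := by
        rw [bk_apply_ne (t + 1) _ n (t - 1) (by omega), bk_apply_ne t g n (t - 1) (by omega)]
      rw [hct1, hctn, hcmn] at hstepY
      rw [hmbn] at hI hc
      omega

end BOT
section PASS

/-- ascending Bender–Knuth pass `bk (d+l-1) ∘ ⋯ ∘ bk d` (rightmost acts first). -/
def passL : ℕ → ℕ → List ℕ
  | _, 0 => []
  | d, (l + 1) => passL (d + 1) l ++ [d]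

lemma passL_mem : ∀ l d x, x ∈ passL d l → d ≤ x ∧ x < d + l := by
  intro l
  induction l with
  | zero => intro d x hx; simp [passL] at hx
  | succ l ih =>
    intro d x hx
    simp only [passL, List.mem_append, List.mem_singleton] at hx
    rcases hx with hx | rfl
    · have := ih (d + 1) x hx; omega
    · omega

lemma passL_cons : ∀ l d, passL d (l + 1) = (d + l) :: passL d l := by
  intro l
  induction l with
  | zero => intro d; simp [passL]
  | succ l ih =>
    intro d
    show passL (d + 1) (l + 1) ++ [d] = (d + (l + 1)) :: passL d (l + 1)
    rw [ih (d + 1)]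
    show (d + 1 + l) :: (passL (d + 1) l ++ [d]) = (d + (l + 1)) :: (passL (d + 1) l ++ [d])
    congr 1
    omega

lemma cv_congr {g1 g2 : GT} {v : ℕ}
    (h : ∀ s j, v - 1 ≤ j → j ≤ v + 1 → g1 s j = g2 s j) : Cv g1 v ↔ Cv g2 v := by
  have hrc1 : ∀ q, rowCount g1 q v = rowCount g2 q v := by
    intro q; unfold rowCount
    rw [h q v (by omega) (by omega), h q (v + 1) (by omega) (by omega)]
  have hrc2 : ∀ q, rowCount g1 q (v - 1) = rowCount g2 q (v - 1) := by
    intro q; unfold rowCount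
    rw [h q (v - 1) (by omega) (by omega), h q (v - 1 + 1) (by omega) (by omega)]
  unfold Cv
  constructor <;> intro hh i <;> have := hh i <;>
    rw [Finset.sum_congr rfl fun q _ => hrc1 q, Finset.sum_congr rfl fun q _ => hrc2 q] at * <;>
    omega

lemma latB_split_low {g : GT} {a b : ℕ} (h : a < b) :
    LatB g a b ↔ Cv g a ∧ LatB g (a + 1) b := by
  constructor
  · intro hl
    exact ⟨hl a le_rfl h, fun v h1 h2 => hl v (by omega) h2⟩
  · rintro ⟨h1, h2⟩ v hv1 hv2
    rcases eq_or_lt_of_le hv1 with rfl | hlt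
    · exact h1
    · exact h2 v hlt hv2

lemma pass_iff {M : ℕ} : ∀ l d (g : GT), 1 ≤ d → d + l ≤ M → IsSSYT M g →
    (LatB g (d + 1) (d + l) ↔ LatB (applyWord (passL d l) g) d (d + l - 1)) := by
  intro l
  induction l with
  | zero =>
    intro d g _ _ _
    constructor <;> intro _ v h1 h2 <;> omega
  | succ l ih =>
    intro d g hd hM hg
    rcases Nat.eq_zero_or_pos l with rfl | hl
    · constructor <;> intro _ v h1 h2 <;> omega
    · have hdM : d < M := by omega
      have hk : IsSSYT M (bk d g) := bk_isSSYT hg hd hdM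
      have happ : applyWord (passL d (l + 1)) g = applyWord (passL (d + 1) l) (bk d g) := by
        show applyWord (passL (d + 1) l ++ [d]) g = _
        rw [applyWord_append]
        rfl
      have hIH := ih (d + 1) (bk d g) (by omega) (by omega) hk
      -- transfer upper pairs from g to k
      have htrans : LatB g (d + 2) (d + (l + 1)) ↔ LatB (bk d g) (d + 2) (d + (l + 1)) := by
        constructor <;> intro hh v h1 h2
        · exact (cv_congr (g1 := g) (g2 := bk d g)
            (fun s j hj1 hj2 => (bk_apply_ne d g s j (by omega)).symm)).mp (hh v h1 h2)
        · exact (cv_congr (g1 := g) (g2 := bk d g)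
            (fun s j hj1 hj2 => (bk_apply_ne d g s j (by omega)).symm)).mpr (hh v h1 h2)
      have hbot : Cv g (d + 1) ↔ Cv (bk (d + 1) (bk d g)) d :=
        bot_iff hg (t := d) hd (by omega)
      obtain ⟨l', rfl⟩ : ∃ l', l = l' + 1 := ⟨l - 1, by omega⟩
      have hsplit2 : passL (d + 1) (l' + 1) = passL (d + 2) l' ++ [d + 1] := rfl
      have hcvres : Cv (applyWord (passL (d + 1) (l' + 1)) (bk d g)) d ↔
          Cv (bk (d + 1) (bk d g)) d := by
        rw [hsplit2, applyWord_append]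
        refine cv_congr (fun s j hj1 hj2 => ?_)
        refine applyWord_col_ne _ _ s j (fun x hx => ?_)
        have := passL_mem _ _ _ hx
        omega
      have hIH2 : LatB (bk d g) (d + 2) (d + (l' + 1 + 1)) ↔
          LatB (applyWord (passL (d + 1) (l' + 1)) (bk d g)) (d + 1) (d + (l' + 1)) := by
        have e3 : d + 2 = d + 1 + 1 := by omega
        have e4 : d + (l' + 1 + 1) = d + 1 + (l' + 1) := by omega
        have e5 : d + (l' + 1) = d + 1 + (l' + 1) - 1 := by omega
        rw [e3, e4, e5]
        exact hIH
      have e1 : d + (l' + 1 + 1) - 1 = d + (l' + 1) := by omega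
      rw [happ, e1, latB_split_low (show d + 1 < d + (l' + 1 + 1) by omega),
        latB_split_low (show d < d + (l' + 1) by omega)]
      refine and_congr ?_ ?_
      · rw [hbot]
        exact hcvres.symm
      · rw [htrans]
        exact hIH2
    
end PASS
section CLAIM

/-- the row-by-row switching word: passes `d = 1, …, r`, pass `r` applied first. -/
def rwWord : ℕ → ℕ → List ℕ
  | 0, _ => []
  | (r + 1), l => rwWord r l ++ passL (r + 1) l

lemma rwWord_mem : ∀ r l x, x ∈ rwWord r l → 1 ≤ x ∧ x < r + l := by
  intro r
  induction r with
  | zero => intro l x hx; simp [rwWord] at hx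
  | succ r ih =>
    intro l x hx
    simp only [rwWord, List.mem_append] at hx
    rcases hx with hx | hx
    · have := ih l x hx; omega
    · have := passL_mem _ _ _ hx; omega

lemma claim_iff {M : ℕ} : ∀ r l (g : GT), r + l ≤ M → IsSSYT M g →
    (LatB g (r + 1) (r + l) ↔ LatB (applyWord (rwWord r l) g) 1 l) := by
  intro r
  induction r with
  | zero =>
    intro l g hM hg
    show LatB g (0 + 1) (0 + l) ↔ LatB g 1 l
    rw [Nat.zero_add, Nat.zero_add]
  | succ r ih =>
    intro l g hM hg
    have happ : applyWord (rwWord (r + 1) l) g =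
        applyWord (rwWord r l) (applyWord (passL (r + 1) l) g) := by
      show applyWord (rwWord r l ++ passL (r + 1) l) g = _
      rw [applyWord_append]
    have h1 := pass_iff (M := M) l (r + 1) g (by omega) (by omega) hg
    have hg1 : IsSSYT M (applyWord (passL (r + 1) l) g) :=
      applyWord_isSSYT (fun x hx => by have := passL_mem _ _ _ hx; omega) hg
    have h2 := ih l _ (by omega) hg1
    rw [happ]
    have e1 : r + 1 + l - 1 = r + l := by omega
    rw [e1] at h1
    exact h1.trans h2

end CLAIM

section WORD

lemma ascBlock_succ (j r : ℕ) : ascBlock j (r + 1) = ascBlock j r ++ [j + r] := by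
  unfold ascBlock
  rw [List.range_succ, List.map_append]
  rfl

lemma ascBlock_mem (j r x : ℕ) (hx : x ∈ ascBlock j r) : j ≤ x ∧ x < j + r := by
  unfold ascBlock at hx
  simp only [List.mem_map, List.mem_range] at hx
  obtain ⟨i, hi, rfl⟩ := hx
  omega

lemma tWord_succ (r l : ℕ) : tWord r (l + 1) = ascBlock (l + 1) r ++ tWord r l := by
  unfold tWord
  rw [List.range_succ_eq_map, List.map_cons, List.flatten_cons]
  simp only [Nat.sub_zero]
  congr 1
  rw [List.map_map]
  congr 1
  refine List.map_congr_left (fun q hq => ?_)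
  simp only [Function.comp_apply]
  congr 1
  omega

lemma tWord_mem : ∀ l r x, x ∈ tWord r l → 1 ≤ x ∧ x < l + r := by
  intro l
  induction l with
  | zero => intro r x hx; simp [tWord] at hx
  | succ l ih =>
    intro r x hx
    rw [tWord_succ] at hx
    rcases List.mem_append.mp hx with hx | hx
    · have := ascBlock_mem _ _ _ hx; omega
    · have := ih r x hx; omega

lemma tWord_zero (l : ℕ) : tWord 0 l = [] := by
  induction l with
  | zero => rfl
  | succ l ih => rw [tWord_succ, ih]; rfl

lemma tWord_peel : ∀ l r (g : GT),
    applyWord (tWord (r + 1) l) g = applyWord (tWord r l ++ passL (r + 1) l) g := by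
  intro l
  induction l with
  | zero => intro r g; rfl
  | succ l ih =>
    intro r g
    have step1 : applyWord (tWord (r + 1) (l + 1)) g =
        applyWord (ascBlock (l + 1) r) (applyWord ((l + 1 + r) ::
          (tWord r l ++ passL (r + 1) l)) g) := by
      rw [tWord_succ, applyWord_append, ih, ascBlock_succ, applyWord_append]
      rfl
    have hmove : applyWord ((l + 1 + r) :: (tWord r l ++ passL (r + 1) l)) g =
        applyWord (tWord r l ++ ((l + 1 + r) :: passL (r + 1) l)) g := by
      have h1 : ((l + 1 + r) :: (tWord r l ++ passL (r + 1) l)) =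
          ((l + 1 + r) :: tWord r l) ++ passL (r + 1) l := rfl
      rw [h1, applyWord_append,
        applyWord_move (l + 1 + r) (tWord r l) _
          (fun y hy => by have := tWord_mem l r y hy; omega),
        ← applyWord_append]
      congr 1
      simp
    have hpass : (l + 1 + r) :: passL (r + 1) l = passL (r + 1) (l + 1) := by
      rw [passL_cons]
      congr 1
      omega
    rw [step1, hmove, hpass, ← applyWord_append, tWord_succ]
    congr 1
    simp

lemma tWord_eq_rwWord : ∀ r l (g : GT),
    applyWord (tWord r l) g = applyWord (rwWord r l) g := by
  intro r
  induction r with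
  | zero => intro l g; rw [tWord_zero]; rfl
  | succ r ih =>
    intro l g
    rw [tWord_peel, applyWord_append, ih]
    show _ = applyWord (rwWord r l ++ passL (r + 1) l) g
    rw [applyWord_append]

end WORD
section WT

variable {M : ℕ} {g : GT}

lemma ssyt_col_le (hg : IsSSYT M g) (i : ℕ) : ∀ j, j ≤ M → g i j ≤ g i M := by
  have key : ∀ k j, j + k ≤ M → g i j ≤ g i (j + k) := by
    intro k
    induction k with
    | zero => intro j _; simp
    | succ k ih =>
      intro j hj
      have h1 : g i j ≤ g i (j + 1) := hg.row i j (by omega)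
      have h2 : g i (j + 1) ≤ g i (j + 1 + k) := ih (j + 1) (by omega)
      have e : j + 1 + k = j + (k + 1) := by omega
      rw [e] at h2
      omega
  intro j hj
  have := key (M - j) j (by omega)
  rwa [show j + (M - j) = M from by omega] at this

/-- all rows beyond the support bound vanish identically -/
lemma ssyt_support (hg : IsSSYT M g) : ∃ N, ∀ i, N ≤ i → ∀ j, g i j = 0 := by
  obtain ⟨N, hN⟩ := hg.2.2.2.1
  refine ⟨N, fun i hi j => ?_⟩
  rcases le_or_gt j M with hj | hj
  · have h1 := ssyt_col_le hg i j hj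
    have h2 := hN i hi
    omega
  · rw [hg.2.2.2.2 i j (by omega), hN i hi]

lemma wt_eq_sum {N : ℕ} (hN : ∀ i, N ≤ i → ∀ j, g i j = 0) (j : ℕ) :
    wt g j = ∑ i ∈ Finset.range N, rowCount g i j := by
  unfold wt
  refine tsum_eq_sum (fun i hi => ?_)
  simp only [Finset.mem_range, not_lt] at hi
  simp [rowCount, hN i hi]

lemma wt_congr {g2 : GT} {j j2 : ℕ} (h : ∀ i, rowCount g i j = rowCount g2 i j2) :
    wt g j = wt g2 j2 := by
  unfold wt
  exact tsum_congr h

lemma bk_support {t N : ℕ} (hN : ∀ i, N ≤ i → ∀ j, g i j = 0) :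
    ∀ i, N ≤ i → ∀ j, bk t g i j = 0 := by
  intro i hi j
  rcases eq_or_ne j t with rfl | hj
  · rw [bk_self]
    rcases eq_or_ne i 0 with rfl | hi0
    · rw [hN 0 hi, hN 0 hi, hN 0 hi, hN 1 (by omega)]
      simp
    · rw [hN i hi, hN i hi, hN i hi, hN (i + 1) (by omega)]
      simp
  · rw [bk_apply_ne _ _ _ _ hj, hN i hi]

lemma wt_bk_ne {t j : ℕ} (ht1 : 1 ≤ t) (hj1 : j ≠ t - 1) (hj2 : j ≠ t) :
    wt (bk t g) j = wt g j := by
  refine wt_congr (fun i => ?_)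
  unfold rowCount
  rw [bk_apply_ne _ _ _ _ hj2, bk_apply_ne _ _ _ _ (by omega : j + 1 ≠ t)]

/-- the Bender–Knuth move swaps the two adjacent weight entries -/
lemma wt_bk_swap {t : ℕ} (hg : IsSSYT M g) (ht1 : 1 ≤ t) (ht : t < M) :
    wt (bk t g) (t - 1) = wt g t ∧ wt (bk t g) t = wt g (t - 1) := by
  obtain ⟨N, hN⟩ := ssyt_support hg
  have hN' : ∀ i, N ≤ i → ∀ j, bk t g i j = 0 := bk_support hN
  have hk : IsSSYT M (bk t g) := bk_isSSYT hg ht1 ht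
  have htel : ∀ K, (∑ i ∈ Finset.range (K + 1), ((bk t g i t : ℤ) + g i t)) =
      (g 0 (t + 1) : ℤ) +
        (∑ i ∈ Finset.range K, ((g i (t - 1) : ℤ) + g (i + 1) (t + 1))) +
        max (g K (t - 1) : ℤ) (g (K + 1) (t + 1)) := by
    intro K
    induction K with
    | zero =>
      simp only [Finset.range_one, Finset.sum_singleton, Finset.range_zero, Finset.sum_empty,
        add_zero, zero_add]
      have h := bk_eval_z hg ht1 ht 0
      rw [show mbz g t 0 = (g 0 (t + 1) : ℤ) from by simp [mbz]] at h
      simp only [zero_add] at h ⊢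
      omega
    | succ K ih =>
      rw [Finset.sum_range_succ, ih, Finset.sum_range_succ]
      have h := bk_eval_z hg ht1 ht (K + 1)
      rw [show mbz g t (K + 1) = min ((g (K + 1) (t + 1) : ℤ)) (g K (t - 1)) from by
        simp only [mbz, if_neg (by omega : ¬ K + 1 = 0), Nat.add_sub_cancel]] at h
      omega
  have hkey : (∑ i ∈ Finset.range (N + 1), (bk t g i t : ℤ)) +
      ∑ i ∈ Finset.range (N + 1), (g i t : ℤ) =
      (∑ i ∈ Finset.range (N + 1), (g i (t - 1) : ℤ)) +
        ∑ i ∈ Finset.range (N + 1), (g i (t + 1) : ℤ) := by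
    have h := htel N
    have d1 : (∑ i ∈ Finset.range (N + 1), ((bk t g i t : ℤ) + g i t)) =
        (∑ i ∈ Finset.range (N + 1), (bk t g i t : ℤ)) +
          ∑ i ∈ Finset.range (N + 1), (g i t : ℤ) := Finset.sum_add_distrib
    have d2 : (∑ i ∈ Finset.range N, ((g i (t - 1) : ℤ) + g (i + 1) (t + 1))) =
        (∑ i ∈ Finset.range N, (g i (t - 1) : ℤ)) +
          ∑ i ∈ Finset.range N, (g (i + 1) (t + 1) : ℤ) := Finset.sum_add_distrib
    have s1 : (∑ i ∈ Finset.range (N + 1), (g i (t - 1) : ℤ)) =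
        (∑ i ∈ Finset.range N, (g i (t - 1) : ℤ)) + (g N (t - 1) : ℤ) :=
      Finset.sum_range_succ _ _
    have s2 : (∑ i ∈ Finset.range (N + 1), (g i (t + 1) : ℤ)) =
        (∑ i ∈ Finset.range N, (g (i + 1) (t + 1) : ℤ)) + (g 0 (t + 1) : ℤ) :=
      Finset.sum_range_succ' _ _
    have hz1 : (g N (t - 1) : ℤ) = 0 := by rw [hN N le_rfl]; simp
    have hz2 : (g (N + 1) (t + 1) : ℤ) = 0 := by rw [hN (N + 1) (by omega)]; simp
    rw [d1] at h
    rw [d2, hz1, hz2] at h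
    omega
  have hc1 : ∀ i, (rowCount (bk t g) i (t - 1) : ℤ) = (bk t g i t : ℤ) - g i (t - 1) := by
    intro i
    unfold rowCount
    have hl : bk t g i (t - 1) = g i (t - 1) := bk_apply_ne _ _ _ _ (by omega)
    have e : t - 1 + 1 = t := by omega
    have hle : bk t g i (t - 1) ≤ bk t g i (t - 1 + 1) := hk.row i (t - 1) (by omega)
    rw [e] at hle
    rw [e, Nat.cast_sub hle, hl]
  have hc2 : ∀ i, (rowCount g i t : ℤ) = (g i (t + 1) : ℤ) - g i t := by
    intro i
    unfold rowCount
    exact_mod_cast Nat.cast_sub (hg.row i t ht)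
  have hc3 : ∀ i, (rowCount (bk t g) i t : ℤ) = (g i (t + 1) : ℤ) - bk t g i t := by
    intro i
    unfold rowCount
    have hu : bk t g i (t + 1) = g i (t + 1) := bk_apply_ne _ _ _ _ (by omega)
    have hle := hk.row i t ht
    rw [Nat.cast_sub hle, hu]
  have hc4 : ∀ i, (rowCount g i (t - 1) : ℤ) = (g i t : ℤ) - g i (t - 1) := by
    intro i
    unfold rowCount
    have e : t - 1 + 1 = t := by omega
    have hle := hg.row i (t - 1) (by omega : t - 1 < M)
    rw [e] at hle ⊢
    rw [Nat.cast_sub hle]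
  constructor
  · rw [wt_eq_sum (g := bk t g) (N := N) hN' (t - 1), wt_eq_sum (g := g) (N := N) hN t]
    have : ((∑ i ∈ Finset.range N, rowCount (bk t g) i (t - 1) : ℕ) : ℤ) =
        ((∑ i ∈ Finset.range N, rowCount g i t : ℕ) : ℤ) := by
      push_cast
      rw [Finset.sum_congr rfl fun i _ => hc1 i, Finset.sum_congr rfl fun i _ => hc2 i]
      have e1 : (∑ i ∈ Finset.range (N + 1), (bk t g i t : ℤ)) =
          (∑ i ∈ Finset.range N, (bk t g i t : ℤ)) + (bk t g N t : ℤ) := Finset.sum_range_succ _ _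
      have e2 : (∑ i ∈ Finset.range (N + 1), (g i t : ℤ)) =
          (∑ i ∈ Finset.range N, (g i t : ℤ)) + (g N t : ℤ) := Finset.sum_range_succ _ _
      have e3 : (∑ i ∈ Finset.range (N + 1), (g i (t - 1) : ℤ)) =
          (∑ i ∈ Finset.range N, (g i (t - 1) : ℤ)) + (g N (t - 1) : ℤ) := Finset.sum_range_succ _ _
      have e4 : (∑ i ∈ Finset.range (N + 1), (g i (t + 1) : ℤ)) =
          (∑ i ∈ Finset.range N, (g i (t + 1) : ℤ)) + (g N (t + 1) : ℤ) := Finset.sum_range_succ _ _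
      have z1 : (g N t : ℤ) = 0 := by rw [hN N le_rfl]; simp
      have z2 : (g N (t - 1) : ℤ) = 0 := by rw [hN N le_rfl]; simp
      have z3 : (g N (t + 1) : ℤ) = 0 := by rw [hN N le_rfl]; simp
      have z4 : (bk t g N t : ℤ) = 0 := by rw [hN' N le_rfl]; simp
      rw [Finset.sum_sub_distrib, Finset.sum_sub_distrib]
      omega
    exact_mod_cast this
  · rw [wt_eq_sum (g := bk t g) (N := N) hN' t, wt_eq_sum (g := g) (N := N) hN (t - 1)]
    have : ((∑ i ∈ Finset.range N, rowCount (bk t g) i t : ℕ) : ℤ) =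
        ((∑ i ∈ Finset.range N, rowCount g i (t - 1) : ℕ) : ℤ) := by
      push_cast
      rw [Finset.sum_congr rfl fun i _ => hc3 i, Finset.sum_congr rfl fun i _ => hc4 i]
      have e1 : (∑ i ∈ Finset.range (N + 1), (bk t g i t : ℤ)) =
          (∑ i ∈ Finset.range N, (bk t g i t : ℤ)) + (bk t g N t : ℤ) := Finset.sum_range_succ _ _
      have e2 : (∑ i ∈ Finset.range (N + 1), (g i t : ℤ)) =
          (∑ i ∈ Finset.range N, (g i t : ℤ)) + (g N t : ℤ) := Finset.sum_range_succ _ _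
      have e3 : (∑ i ∈ Finset.range (N + 1), (g i (t - 1) : ℤ)) =
          (∑ i ∈ Finset.range N, (g i (t - 1) : ℤ)) + (g N (t - 1) : ℤ) := Finset.sum_range_succ _ _
      have e4 : (∑ i ∈ Finset.range (N + 1), (g i (t + 1) : ℤ)) =
          (∑ i ∈ Finset.range N, (g i (t + 1) : ℤ)) + (g N (t + 1) : ℤ) := Finset.sum_range_succ _ _
      have z1 : (g N t : ℤ) = 0 := by rw [hN N le_rfl]; simp
      have z2 : (g N (t - 1) : ℤ) = 0 := by rw [hN N le_rfl]; simp
      have z3 : (g N (t + 1) : ℤ) = 0 := by rw [hN N le_rfl]; simp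
      have z4 : (bk t g N t : ℤ) = 0 := by rw [hN' N le_rfl]; simp
      rw [Finset.sum_sub_distrib, Finset.sum_sub_distrib]
      omega
    exact_mod_cast this

end WT
section PASSWT

lemma wt_pass {M : ℕ} : ∀ l d (g : GT), 1 ≤ d → d + l ≤ M → IsSSYT M g → ∀ j,
    wt (applyWord (passL d l) g) j =
      if d - 1 ≤ j ∧ j + 1 < d + l then wt g (j + 1)
      else if j + 1 = d + l ∧ 1 ≤ l then wt g (d - 1)
      else wt g j := by
  intro l
  induction l with
  | zero =>
    intro d g hd hM hg j
    rw [if_neg (by omega), if_neg (by omega)]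
    rfl
  | succ l ih =>
    intro d g hd hM hg j
    have hkb : IsSSYT M (bk d g) := bk_isSSYT hg hd (by omega)
    have happ : applyWord (passL d (l + 1)) g = applyWord (passL (d + 1) l) (bk d g) := by
      show applyWord (passL (d + 1) l ++ [d]) g = _
      rw [applyWord_append]
      rfl
    rw [happ, ih (d + 1) (bk d g) (by omega) (by omega) hkb j]
    have hswap := wt_bk_swap hg hd (by omega : d < M)
    by_cases c1 : d + 1 - 1 ≤ j ∧ j + 1 < d + 1 + l
    · rw [if_pos c1, wt_bk_ne hd (by omega) (by omega), if_pos (by omega :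
        d - 1 ≤ j ∧ j + 1 < d + (l + 1))]
    · rw [if_neg c1]
      by_cases c2 : j + 1 = d + 1 + l ∧ 1 ≤ l
      · rw [if_pos c2, Nat.add_sub_cancel, if_neg (by omega), if_pos (by omega :
          j + 1 = d + (l + 1) ∧ 1 ≤ l + 1)]
        exact hswap.2
      · rw [if_neg c2]
        by_cases c3 : j = d - 1
        · rw [if_pos (by omega : d - 1 ≤ j ∧ j + 1 < d + (l + 1))]
          subst c3
          rw [show d - 1 + 1 = d from by omega]
          exact hswap.1
        · by_cases c4 : j = d
          · subst c4
            have hl0 : l = 0 := by omega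
            subst hl0
            rw [if_neg (by omega), if_pos (by omega : j + 1 = j + (0 + 1) ∧ 1 ≤ 0 + 1)]
            exact hswap.2
          · rw [wt_bk_ne hd c3 c4, if_neg (by omega), if_neg (by omega)]

lemma wt_rw {M : ℕ} : ∀ r l (g : GT), r + l ≤ M → IsSSYT M g → ∀ j, j < l →
    wt (applyWord (rwWord r l) g) j = wt g (j + r) := by
  intro r
  induction r with
  | zero =>
    intro l g hM hg j hj
    show wt g j = wt g (j + 0)
    rw [Nat.add_zero]
  | succ r ih =>
    intro l g hM hg j hj
    have happ : applyWord (rwWord (r + 1) l) g =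
        applyWord (rwWord r l) (applyWord (passL (r + 1) l) g) := by
      show applyWord (rwWord r l ++ passL (r + 1) l) g = _
      rw [applyWord_append]
    have hg1 : IsSSYT M (applyWord (passL (r + 1) l) g) :=
      applyWord_isSSYT (fun x hx => by have := passL_mem _ _ _ hx; omega) hg
    rw [happ, ih l _ (by omega) hg1 j hj,
      wt_pass (M := M) l (r + 1) g (by omega) (by omega) hg (j + r),
      if_pos (by omega : r + 1 - 1 ≤ j + r ∧ j + r + 1 < r + 1 + l),
      show j + r + 1 = j + (r + 1) from by omega]

end PASSWT
section ENDGAME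

variable {M l : ℕ} {F : GT} {nu : ℕ → ℕ}

lemma straight_zero (hF : IsSSYT M F) (h0 : ∀ i, F i 0 = 0) :
    ∀ v, v ≤ M → ∀ i, v ≤ i → F i v = 0 := by
  intro v
  induction v with
  | zero => intro _ i _; exact h0 i
  | succ v ih =>
    intro hv i hi
    have h1 : F i (v + 1) ≤ F (i - 1) v := by
      have := hF.colc (i - 1) v (by omega)
      rwa [show i - 1 + 1 = i from by omega] at this
    have h2 := ih (by omega) (i - 1) (by omega)
    omega

lemma straight_rowCount (hF : IsSSYT M F) (hl : l ≤ M) (h0 : ∀ i, F i 0 = 0)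
    (hwt : ∀ v, v < l → wt F v = nu v) (hlat : LatB F 1 l) :
    ∀ v, v < l → (∀ i, i ≠ v → rowCount F i v = 0) ∧ rowCount F v v = nu v := by
  intro v
  induction v with
  | zero =>
    intro hv
    have hz : ∀ i, i ≠ 0 → rowCount F i 0 = 0 := by
      intro i hi
      unfold rowCount
      rw [straight_zero hF h0 1 (by omega) i (by omega),
        straight_zero hF h0 0 (by omega) i (by omega)]
    refine ⟨hz, ?_⟩
    have hw := hwt 0 hv
    rw [← hw]
    unfold wt
    exact (tsum_eq_single 0 (fun i hi => hz i hi)).symm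
  | succ v ih =>
    intro hv
    obtain ⟨ihz, _⟩ := ih (by omega)
    have hupper : ∀ i, v + 1 < i → rowCount F i (v + 1) = 0 := by
      intro i hi
      unfold rowCount
      rw [straight_zero hF h0 (v + 2) (by omega) i (by omega),
        straight_zero hF h0 (v + 1) (by omega) i (by omega)]
    have hlow : ∀ i, i < v + 1 → rowCount F i (v + 1) = 0 := by
      intro i hi
      have hcv := hlat (v + 1) (by omega) (by omega) i
      have hz : (∑ q ∈ Finset.range i, rowCount F q ((v + 1) - 1)) = 0 := by
        refine Finset.sum_eq_zero (fun q hq => ?_)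
        simp only [Finset.mem_range] at hq
        rw [Nat.add_sub_cancel]
        exact ihz q (by omega)
      rw [hz, Nat.le_zero] at hcv
      have := (Finset.sum_eq_zero_iff.mp hcv) i (by simp)
      exact this
    have hz : ∀ i, i ≠ v + 1 → rowCount F i (v + 1) = 0 := by
      intro i hi
      rcases lt_or_gt_of_ne hi with h | h
      · exact hlow i h
      · exact hupper i h
    refine ⟨hz, ?_⟩
    have hw := hwt (v + 1) hv
    rw [← hw]
    unfold wt
    exact (tsum_eq_single (v + 1) (fun i hi => hz i hi)).symm

lemma straight_eval (hF : IsSSYT M F) (hl : l ≤ M) (h0 : ∀ i, F i 0 = 0)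
    (hwt : ∀ v, v < l → wt F v = nu v) (hlat : LatB F 1 l) :
    ∀ i j, j ≤ l → F i j = if i < j then nu i else 0 := by
  intro i j
  induction j with
  | zero =>
    intro _
    rw [if_neg (by omega)]
    exact h0 i
  | succ j ihj =>
    intro hj
    have hrc := straight_rowCount hF hl h0 hwt hlat j (by omega)
    have hstep : F i (j + 1) = F i j + rowCount F i j := by
      unfold rowCount
      have := hF.row i j (by omega : j < M)
      omega
    rw [hstep, ihj (by omega)]
    by_cases hij : i = j
    · subst hij
      rw [if_neg (lt_irrefl _), hrc.2, if_pos (by omega), zero_add]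
    · rw [hrc.1 i hij]
      by_cases hij2 : i < j
      · rw [if_pos hij2, if_pos (by omega), add_zero]
      · rw [if_neg hij2, if_neg (by omega), add_zero]

lemma canGT_rowCount (nu : ℕ → ℕ) (q v : ℕ) :
    rowCount (canGT nu) q v = if q = v then nu v else 0 := by
  unfold rowCount canGT
  by_cases h1 : q < v + 1 <;> by_cases h2 : q < v
  · rw [if_pos h1, if_pos h2, if_neg (by omega)]
    omega
  · rw [if_pos h1, if_neg h2, if_pos (by omega : q = v)]
    have : q = v := by omega
    rw [this]
    omega
  · omega
  · rw [if_neg h1, if_neg h2, if_neg (by omega)]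

lemma canGT_cv (hnu : ∀ i, nu (i + 1) ≤ nu i) {v : ℕ} (hv : 1 ≤ v) : Cv (canGT nu) v := by
  intro i
  have e1 : (∑ q ∈ Finset.range (i + 1), rowCount (canGT nu) q v) =
      if v ∈ Finset.range (i + 1) then nu v else 0 := by
    rw [Finset.sum_congr rfl (fun q _ => canGT_rowCount nu q v)]
    exact Finset.sum_ite_eq' _ _ _
  have e2 : (∑ q ∈ Finset.range i, rowCount (canGT nu) q (v - 1)) =
      if v - 1 ∈ Finset.range i then nu (v - 1) else 0 := by
    rw [Finset.sum_congr rfl (fun q _ => canGT_rowCount nu q (v - 1))]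
    exact Finset.sum_ite_eq' _ _ _
  rw [e1, e2]
  have hd : nu v ≤ nu (v - 1) := by
    have := hnu (v - 1)
    rwa [show v - 1 + 1 = v from by omega] at this
  simp only [Finset.mem_range]
  by_cases h1 : v < i + 1
  · rw [if_pos h1, if_pos (by omega)]
    exact hd
  · rw [if_neg h1]
    omega

end ENDGAME

/-- Proposition 9.
Let `μ ⊆ λ`, `ν ⊢ |λ/μ|` with `m = ℓ(ν)`, and `A ∈ YT(λ/μ, ν)`.  Then `A` is a
Littlewood–Richardson tableau if and only if `ψ(A) = Can(ν)`. -/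
theorem lr_iff_rectifies_to_canonical
    (m : ℕ) (lam mu nu : ℕ → ℕ)
    (hlam : IsPartition lam) (hmu : IsPartition mu) (hnu : IsPartition nu)
    (hsub : subShape mu lam)
    (hsize : psize mu + psize nu = psize lam)
    (hm : ∀ j, nu j = 0 ↔ m ≤ j)
    (A : GT) (hA : MemYT m lam mu nu A) :
    IsLattice m A ↔ rect m A = canGT nu := by
  classical
  obtain ⟨hssytA, hA0, hAm, hwtA⟩ := hA
  set μf : ℕ → ℕ := fun i => A i 0 with hμf
  set r : ℕ := numRows μf with hrdef
  have hmu0 : ∀ i, r ≤ i → μf i = 0 := by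
    have hne : {N | ∀ i, N ≤ i → μf i = 0}.Nonempty := by
      obtain ⟨N, hN⟩ := hmu.2
      exact ⟨N, fun i hi => by simp only [hμf]; rw [hA0 i]; exact hN i hi⟩
    exact Nat.sInf_mem hne
  have hdec : ∀ i, μf (i + 1) ≤ μf i := by
    intro i
    simp only [hμf]
    rw [hA0 i, hA0 (i + 1)]
    exact hmu.1 i
  set G0 : GT := glue r (canGT μf) A with hG0def
  -- basic glue facts
  have hglue_low : ∀ i j, j ≤ r → G0 i j = canGT μf i j := by
    intro i j hj
    simp only [hG0def, glue, if_pos hj]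
  have hglue_high : ∀ i j, r < j → G0 i j = A i (j - r) := by
    intro i j hj
    simp only [hG0def, glue, if_neg (by omega : ¬ j ≤ r)]
  have hcol_r : ∀ i, G0 i r = A i 0 := by
    intro i
    rw [hglue_low i r le_rfl]
    unfold canGT
    by_cases hi : i < r
    · rw [if_pos hi]
    · rw [if_neg hi]
      have := hmu0 i (by omega)
      simp only [hμf] at this
      omega
  have hrcG : ∀ q w, rowCount G0 q (r + w) = rowCount A q w := by
    intro q w
    unfold rowCount
    rcases Nat.eq_zero_or_pos w with rfl | hw
    · have e1 : r + 0 = r := by omega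
      rw [e1, hcol_r q, hglue_high q (r + 1) (by omega),
        show r + 1 - r = 1 from by omega]
    · rw [hglue_high q (r + w) (by omega), hglue_high q (r + w + 1) (by omega),
        show r + w - r = w from by omega, show r + w + 1 - r = w + 1 from by omega]
  -- G0 is an SSYT with entries ≤ r + m
  have hG0ssyt : IsSSYT (r + m) G0 := by
    refine ⟨?_, ?_, ?_, ?_, ?_⟩
    · intro i j hj
      by_cases hjr : j + 1 ≤ r
      · rw [hglue_low i j (by omega), hglue_low i (j + 1) hjr]
        unfold canGT
        split_ifs <;> omega
      · by_cases hjr2 : j ≤ r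
        · have hjr3 : j = r := by omega
          rw [hjr3, hcol_r i, hglue_high i (r + 1) (by omega),
            show r + 1 - r = 1 from by omega]
          exact hssytA.row i 0 (by omega)
        · rw [hglue_high i j (by omega), hglue_high i (j + 1) (by omega)]
          have h := hssytA.row i (j - r) (by omega : j - r < m)
          rwa [show j - r + 1 = j + 1 - r from by omega] at h
    · intro i j hj
      by_cases hjr : j + 1 ≤ r
      · rw [hglue_low (i + 1) (j + 1) hjr, hglue_low i j (by omega)]
        unfold canGT
        split_ifs with h1 h2
        · exact hdec i
        · omega
        · exact Nat.zero_le _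
        · exact Nat.zero_le _
      · by_cases hjr2 : j ≤ r
        · have hjr3 : j = r := by omega
          rw [hjr3, hcol_r i, hglue_high (i + 1) (r + 1) (by omega),
            show r + 1 - r = 1 from by omega]
          exact hssytA.colc i 0 (by omega)
        · rw [hglue_high (i + 1) (j + 1) (by omega), hglue_high i j (by omega)]
          have h := hssytA.colc i (j - r) (by omega : j - r < m)
          rwa [show j - r + 1 = j + 1 - r from by omega] at h
    · intro i
      rw [hglue_low (i + 1) 0 (by omega), hglue_low i 0 (by omega)]
      unfold canGT
      rw [if_neg (by omega), if_neg (by omega)]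
    · obtain ⟨N, hNA⟩ := hssytA.2.2.2.1
      refine ⟨max N r, fun i hi => ?_⟩
      rcases Nat.eq_zero_or_pos m with rfl | hmpos
      · rw [Nat.add_zero, hcol_r i]
        have := hmu0 i (by omega)
        simp only [hμf] at this
        exact this
      · rw [hglue_high i (r + m) (by omega), show r + m - r = m from by omega]
        exact hNA i (by omega)
    · intro i j hj
      rcases Nat.eq_zero_or_pos m with rfl | hmpos
      · rw [Nat.add_zero] at hj ⊢
        rcases eq_or_lt_of_le hj with rfl | hjr
        · rfl
        · rw [hglue_high i j (by omega), hcol_r i]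
          exact hssytA.2.2.2.2 i (j - r) (by omega)
      · rw [hglue_high i j (by omega), hglue_high i (r + m) (by omega),
          show r + m - r = m from by omega]
        exact hssytA.2.2.2.2 i (j - r) (by omega)
  -- lattice condition transfer between A and G0
  have hcvG : ∀ w, 1 ≤ w → (Cv G0 (r + w) ↔ Cv A w) := by
    intro w hw
    have e : r + w - 1 = r + (w - 1) := by omega
    have k1 : ∀ i, (∑ q ∈ Finset.range (i + 1), rowCount G0 q (r + w)) =
        ∑ q ∈ Finset.range (i + 1), rowCount A q w :=
      fun i => Finset.sum_congr rfl fun q _ => hrcG q w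
    have k2 : ∀ i, (∑ q ∈ Finset.range i, rowCount G0 q (r + w - 1)) =
        ∑ q ∈ Finset.range i, rowCount A q (w - 1) := by
      intro i
      rw [e]
      exact Finset.sum_congr rfl fun q _ => hrcG q (w - 1)
    constructor <;> intro h i <;> have hcv := h i
    · rwa [k1 i, k2 i] at hcv
    · rwa [← k1 i, ← k2 i] at hcv
  have hlatG : LatB G0 (r + 1) (r + m) ↔ IsLattice m A := by
    rw [isLattice_iff_latB]
    constructor
    · intro h w h1 h2
      exact (hcvG w h1).mp (h (r + w) (by omega) (by omega))
    · intro h v h1 h2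
      have e : v = r + (v - r) := by omega
      rw [e]
      exact (hcvG (v - r) (by omega)).mpr (h (v - r) (by omega) (by omega))
  -- the rectified tableau
  set F : GT := applyWord (tWord r m) G0 with hFdef
  have hrect : rect m A = restrictGT m F := rfl
  have hFrw : F = applyWord (rwWord r m) G0 := tWord_eq_rwWord r m G0
  have hFssyt : IsSSYT (r + m) F := by
    rw [hFdef]
    exact applyWord_isSSYT (fun x hx => by have := tWord_mem m r x hx; omega) hG0ssyt
  have hF0 : ∀ i, F i 0 = 0 := by
    intro i
    rw [hFdef, applyWord_col_ne _ _ i 0 (fun x hx => by have := tWord_mem m r x hx; omega),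
      hglue_low i 0 (by omega)]
    unfold canGT
    rw [if_neg (by omega)]
  have hwtF : ∀ v, v < m → wt F v = nu v := by
    intro v hv
    rw [hFrw, wt_rw (M := r + m) r m G0 le_rfl hG0ssyt v hv]
    have hGA : wt G0 (v + r) = wt A v := by
      rw [show v + r = r + v from by omega]
      exact wt_congr (fun i => hrcG i v)
    rw [hGA]
    exact hwtA v hv
  have hlatF : LatB G0 (r + 1) (r + m) ↔ LatB F 1 m := by
    have h := claim_iff (M := r + m) r m G0 le_rfl hG0ssyt
    rwa [← hFrw] at h
  constructor
  · intro hlatt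
    have hlatF1 : LatB F 1 m := hlatF.mp (hlatG.mpr hlatt)
    have heval := straight_eval hFssyt (by omega : m ≤ r + m) hF0 hwtF hlatF1
    rw [hrect]
    funext i j
    show F i (min j m) = canGT nu i j
    unfold canGT
    rcases le_or_gt j m with hj | hj
    · rw [min_eq_left hj, heval i j hj]
    · rw [min_eq_right (by omega), heval i m le_rfl]
      by_cases him : i < m
      · rw [if_pos him, if_pos (by omega)]
      · rw [if_neg him]
        by_cases hij : i < j
        · rw [if_pos hij]
          exact ((hm i).mpr (by omega)).symm
        · rw [if_neg hij]
  · intro hre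
    rw [hrect] at hre
    have hFm : ∀ i j, j ≤ m → F i j = canGT nu i j := by
      intro i j hj
      have h := congrFun (congrFun hre i) j
      show F i j = _
      rw [← h]
      show F i j = F i (min j m)
      rw [min_eq_left hj]
    have hlatF1 : LatB F 1 m := by
      intro v h1 h2
      refine (cv_congr (g2 := canGT nu) (fun s j _ hj2 => hFm s j (by omega))).mpr ?_
      exact canGT_cv hnu.1 h1
    exact hlatG.mp (hlatF.mpr hlatF1)

end YoungTableauBijections
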